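/- arXiv:1501.02229 — 2 statements merged into one kernel-verified Lean document; each statement's English description precedes it below -/
import Mathlib

section
/- Let x₁,...,x_n ∈ ℝ^m be samples at times 0 < t₁ < ... < t_n of a zero-mean process with E[x_i x_jᵀ] = min(t_i,t_j)(α − max(t_i,t_j)β). Then the estimator α̂ = (1/(n−1)) Σ_{i=1}^{n−1} (t_{i+1}x_i − t_i x_{i+1})(t_{i+1}x_i − t_i x_{i+1})ᵀ / (t_i t_{i+1}(t_{i+1} − t_i)) satisfies E[α̂] = α. -/
/-!
Write `a = tᵢ`, `b = tᵢ₊₁`. Expanding the product, the expectation of the `i`-th summand of `α̂`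
is `b² c(a,a) - 2ab c(a,b) + a² c(b,b)` divided by `ab(b-a)`, where
`c(s,u) = min s u • α - (min s u * max s u) • β` is the covariance kernel. For `a < b` the
`β`-terms cancel (`b²a² - 2a²b² + a²b² = 0`) and the `α`-terms give `ab² - 2a²b + a²b = ab(b-a)`,
so every summand is an unbiased estimator of `α`, hence so is their average.
-/

open MeasureTheory

def covKernel (a b s u : ℝ) : ℝ :=
  min s u * a - (min s u * max s u) * b

theorem covKernel_increment {a b s u : ℝ} (hsu : s ≤ u) :
    u ^ 2 * covKernel a b s s - s * u * covKernel a b s u - s * u * covKernel a b u s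
      + s ^ 2 * covKernel a b u u = s * u * (u - s) * a := by
  simp only [covKernel, min_self, max_self, min_eq_left hsu, max_eq_right hsu,
    min_eq_right hsu, max_eq_left hsu]
  ring

section SecondMoment

variable {Ω : Type*} [MeasurableSpace Ω] {μ : Measure Ω} {f₁ f₂ g₁ g₂ : Ω → ℝ}

theorem integrable_lincomb_mul_lincomb (a b : ℝ)
    (hff : Integrable (fun ω => f₁ ω * f₂ ω) μ) (hfg : Integrable (fun ω => f₁ ω * g₂ ω) μ)
    (hgf : Integrable (fun ω => g₁ ω * f₂ ω) μ) (hgg : Integrable (fun ω => g₁ ω * g₂ ω) μ) :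
    Integrable (fun ω => (b * f₁ ω - a * g₁ ω) * (b * f₂ ω - a * g₂ ω)) μ := by
  have h := (((hff.const_mul (b ^ 2)).sub (hfg.const_mul (a * b))).sub
    (hgf.const_mul (a * b))).add (hgg.const_mul (a ^ 2))
  refine h.congr (Filter.Eventually.of_forall fun ω => ?_)
  simp only [Pi.add_apply, Pi.sub_apply]
  ring

theorem integral_lincomb_mul_lincomb (a b : ℝ)
    (hff : Integrable (fun ω => f₁ ω * f₂ ω) μ) (hfg : Integrable (fun ω => f₁ ω * g₂ ω) μ)
    (hgf : Integrable (fun ω => g₁ ω * f₂ ω) μ) (hgg : Integrable (fun ω => g₁ ω * g₂ ω) μ) :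
    ∫ ω, (b * f₁ ω - a * g₁ ω) * (b * f₂ ω - a * g₂ ω) ∂μ
      = b ^ 2 * ∫ ω, f₁ ω * f₂ ω ∂μ - a * b * ∫ ω, f₁ ω * g₂ ω ∂μ
        - a * b * ∫ ω, g₁ ω * f₂ ω ∂μ + a ^ 2 * ∫ ω, g₁ ω * g₂ ω ∂μ := by
  have hexpand : (fun ω => (b * f₁ ω - a * g₁ ω) * (b * f₂ ω - a * g₂ ω)) = fun ω =>
      b ^ 2 * (f₁ ω * f₂ ω) - a * b * (f₁ ω * g₂ ω) - a * b * (g₁ ω * f₂ ω)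
        + a ^ 2 * (g₁ ω * g₂ ω) := by
    funext ω
    ring
  rw [hexpand, integral_add _ (hgg.const_mul _), integral_sub _ (hgf.const_mul _),
    integral_sub (hff.const_mul _) (hfg.const_mul _), integral_const_mul, integral_const_mul,
    integral_const_mul, integral_const_mul]
  · exact (hff.const_mul _).sub (hfg.const_mul _)
  · exact ((hff.const_mul _).sub (hfg.const_mul _)).sub (hgf.const_mul _)

theorem integral_normalizedIncrement {a b s u : ℝ} (hs : 0 < s) (hsu : s < u)
    (hff : Integrable (fun ω => f₁ ω * f₂ ω) μ) (hfg : Integrable (fun ω => f₁ ω * g₂ ω) μ)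
    (hgf : Integrable (fun ω => g₁ ω * f₂ ω) μ) (hgg : Integrable (fun ω => g₁ ω * g₂ ω) μ)
    (cff : ∫ ω, f₁ ω * f₂ ω ∂μ = covKernel a b s s)
    (cfg : ∫ ω, f₁ ω * g₂ ω ∂μ = covKernel a b s u)
    (cgf : ∫ ω, g₁ ω * f₂ ω ∂μ = covKernel a b u s)
    (cgg : ∫ ω, g₁ ω * g₂ ω ∂μ = covKernel a b u u) :
    ∫ ω, (u * f₁ ω - s * g₁ ω) * (u * f₂ ω - s * g₂ ω) / (s * u * (u - s)) ∂μ = a := by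
  have hden : s * u * (u - s) ≠ 0 := by
    have := hs.trans hsu
    have := sub_pos.mpr hsu
    positivity
  rw [integral_div, integral_lincomb_mul_lincomb s u hff hfg hgf hgg, cff, cfg, cgf, cgg,
    covKernel_increment hsu.le, mul_div_cancel_left₀ _ hden]

end SecondMoment

theorem stmt_13_general {Ω : Type*} [MeasurableSpace Ω] (μ : Measure Ω)
    {m : ℕ} (n : ℕ) (hn : 2 ≤ n)
    (t : ℕ → ℝ) (ht0 : 0 < t 0) (htmono : ∀ i j, i < j → j < n → t i < t j)
    (α β : Matrix (Fin m) (Fin m) ℝ)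
    (X : ℕ → Ω → Fin m → ℝ)
    (hint : ∀ i < n, ∀ j < n, ∀ k l, Integrable (fun ω => X i ω k * X j ω l) μ)
    (hcov : ∀ i < n, ∀ j < n, ∀ k l,
      ∫ ω, X i ω k * X j ω l ∂μ
        = min (t i) (t j) * α k l - (min (t i) (t j) * max (t i) (t j)) * β k l)
    (αhat : Ω → Matrix (Fin m) (Fin m) ℝ)
    (hαhat : ∀ ω k l, αhat ω k l
      = (1 / (n - 1 : ℝ)) * ∑ i ∈ Finset.range (n - 1),
          (t (i + 1) * X i ω k - t i * X (i + 1) ω k)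
            * (t (i + 1) * X i ω l - t i * X (i + 1) ω l)
            / (t i * t (i + 1) * (t (i + 1) - t i))) :
    ∀ k l, ∫ ω, αhat ω k l ∂μ = α k l := by
  intro k l
  have hstep : ∀ i ∈ Finset.range (n - 1),
      Integrable (fun ω => (t (i + 1) * X i ω k - t i * X (i + 1) ω k)
        * (t (i + 1) * X i ω l - t i * X (i + 1) ω l) / (t i * t (i + 1) * (t (i + 1) - t i))) μ
      ∧ ∫ ω, (t (i + 1) * X i ω k - t i * X (i + 1) ω k)
        * (t (i + 1) * X i ω l - t i * X (i + 1) ω l) / (t i * t (i + 1) * (t (i + 1) - t i)) ∂μ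
        = α k l := by
    intro i hi
    have hi1 : i + 1 < n := by rw [Finset.mem_range] at hi; omega
    have hi : i < n := by omega
    have hpos : 0 < t i := by
      rcases Nat.eq_zero_or_pos i with rfl | h
      · exact ht0
      · exact ht0.trans (htmono 0 i h hi)
    have hff := hint i hi i hi k l
    have hfg := hint i hi _ hi1 k l
    have hgf := hint _ hi1 i hi k l
    have hgg := hint _ hi1 _ hi1 k l
    exact ⟨(integrable_lincomb_mul_lincomb _ _ hff hfg hgf hgg).div_const _,
      integral_normalizedIncrement hpos (htmono i (i + 1) i.lt_succ_self hi1) hff hfg hgf hgg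
        (hcov i hi i hi k l) (hcov i hi _ hi1 k l) (hcov _ hi1 i hi k l) (hcov _ hi1 _ hi1 k l)⟩
  have hcard : ((n - 1 : ℕ) : ℝ) = (n : ℝ) - 1 := by push_cast [Nat.cast_sub (by omega : 1 ≤ n)]; rfl
  have hcard_ne : (n : ℝ) - 1 ≠ 0 := by rw [← hcard]; exact_mod_cast (by omega : n - 1 ≠ 0)
  simp_rw [hαhat]
  rw [integral_const_mul, integral_finsetSum _ fun i hi => (hstep i hi).1,
    Finset.sum_congr rfl fun i hi => (hstep i hi).2, Finset.sum_const, Finset.card_range,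
    nsmul_eq_mul, hcard]
  field_simp

theorem stmt_13 {Ω : Type*} [MeasurableSpace Ω] (μ : Measure Ω) [IsProbabilityMeasure μ]
    {m : ℕ} (n : ℕ) (hn : 2 ≤ n)
    (t : ℕ → ℝ) (ht0 : 0 < t 0) (htmono : ∀ i j, i < j → j < n → t i < t j)
    (α β : Matrix (Fin m) (Fin m) ℝ)
    (X : ℕ → Ω → Fin m → ℝ)
    (hmean : ∀ i < n, ∀ k, ∫ ω, X i ω k ∂μ = 0)
    (hint : ∀ i < n, ∀ j < n, ∀ k l, Integrable (fun ω => X i ω k * X j ω l) μ)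
    (hcov : ∀ i < n, ∀ j < n, ∀ k l,
      ∫ ω, X i ω k * X j ω l ∂μ
        = min (t i) (t j) * α k l - (min (t i) (t j) * max (t i) (t j)) * β k l)
    (αhat : Ω → Matrix (Fin m) (Fin m) ℝ)
    (hαhat : ∀ ω k l, αhat ω k l
      = (1 / (n - 1 : ℝ)) * ∑ i ∈ Finset.range (n - 1),
          (t (i + 1) * X i ω k - t i * X (i + 1) ω k)
            * (t (i + 1) * X i ω l - t i * X (i + 1) ω l)
            / (t i * t (i + 1) * (t (i + 1) - t i))) :
    ∀ k l, ∫ ω, αhat ω k l ∂μ = α k l :=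
  stmt_13_general μ n hn t ht0 htmono α β X hint hcov αhat hαhat
end

section
/- Let Γ(t,s) = min(s,t)(α̂ − max(s,t)β̂) where β̂ = α̂/t_n − x_n x_nᵀ/t_n², so Γ(t_n,t_n) = x_n x_nᵀ. Then with P = (x_nᵀx_n)⁻² x_n x_nᵀ the posterior mean Γ(t,t_n)·P·x_n equals x_n + (x_n/t_n − (x_nᵀx_n)⁻¹ α̂ x_n)(t − t_n) for t ≥ t_n. -/
open Matrix

lemma vecMulVec_mulVec' {m : ℕ} (x y v : Fin m → ℝ) :
    (Matrix.vecMulVec x y).mulVec v = (y ⬝ᵥ v) • x := by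
  ext i
  simp only [Matrix.mulVec, Matrix.vecMulVec, dotProduct, Pi.smul_apply,
    Matrix.of_apply, smul_eq_mul]
  rw [Finset.sum_mul]
  exact Finset.sum_congr rfl fun j _ => by ring

theorem stmt_17 {m : ℕ} (tn : ℝ) (htn : 0 < tn)
    (αhat : Matrix (Fin m) (Fin m) ℝ) (hαsym : αhatᵀ = αhat)
    (xn : Fin m → ℝ) (hxn : xn ≠ 0)
    (βhat : Matrix (Fin m) (Fin m) ℝ)
    (hβhat : βhat = (1 / tn) • αhat - (1 / tn ^ 2) • Matrix.vecMulVec xn xn)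
    (Γ : ℝ → ℝ → Matrix (Fin m) (Fin m) ℝ)
    (hΓ : ∀ t s, Γ t s = min s t • αhat - (min s t * max s t) • βhat)
    (P : Matrix (Fin m) (Fin m) ℝ)
    (hP : P = ((∑ i, xn i ^ 2) ^ 2)⁻¹ • Matrix.vecMulVec xn xn) :
    ∀ t, tn ≤ t →
      (Γ t tn).mulVec (P.mulVec xn)
        = xn + (t - tn) • ((1 / tn) • xn - (∑ i, xn i ^ 2)⁻¹ • αhat.mulVec xn) := by
  intro t ht
  set c : ℝ := ∑ i, xn i ^ 2 with hcdef
  obtain ⟨i0, hi0⟩ := Function.ne_iff.mp hxn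
  have hcpos : 0 < c := by
    apply Finset.sum_pos' (fun i _ => sq_nonneg _)
    refine ⟨i0, Finset.mem_univ i0, ?_⟩
    have : xn i0 ≠ 0 := hi0
    positivity
  have hc : c ≠ 0 := ne_of_gt hcpos
  have htn' : tn ≠ 0 := ne_of_gt htn
  have hdot : xn ⬝ᵥ xn = c := by simp [dotProduct, hcdef, sq]
  have hPv : P.mulVec xn = c⁻¹ • xn := by
    rw [hP, Matrix.smul_mulVec, vecMulVec_mulVec', hdot, smul_smul]
    congr 1
    field_simp
  rw [hPv, Matrix.mulVec_smul, hΓ, min_eq_left ht, max_eq_right ht, hβhat]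
  rw [smul_sub, smul_smul, smul_smul, sub_sub_eq_add_sub]
  rw [Matrix.sub_mulVec, Matrix.add_mulVec, Matrix.smul_mulVec,
    Matrix.smul_mulVec, Matrix.smul_mulVec, vecMulVec_mulVec', hdot]
  ext i
  simp only [Pi.smul_apply, Pi.sub_apply, Pi.add_apply, smul_eq_mul]
  field_simp
  ring
end
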